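/- There is a natural identification of the tangent space of the deformation functor of a Poisson morphism f:(X,Λ₀)→(Y,Π₀) leaving domain and target fixed with the 0-th hypercohomology of the complex f^*T_Y^•: Def_{(X,Λ₀)/f/(Y,Π₀)}(k[ε]) ≅ ℍ⁰(X, f^*T_Y^•). -/

import Mathlib

/-!
STATEMENT 12.  Natural identification
`Def_{(X,Λ₀)/f/(Y,Π₀)}(k[ε]) ≅ ℍ⁰(X, f^*T_Y^•)`.

Affine model: first-order deformations of `f` with fixed (trivially deformed) domain and
target are Poisson `k[ε]`-algebra homomorphisms `Φ : C[ε] → B[ε]` inducing `f` mod `ε`;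
`ℍ⁰(X,f^*T_Y^•)` is the space of derivations `v ∈ Der_k(C,B) = Hom_C(Ω_{C/k},B)` with
`π(v) = 0`.  The identification is the bijection `v ↦ f + εv`, stated as:
the map is well defined, injective and surjective.
-/

structure PoissonBracket (R₀ R : Type*) [CommRing R₀] [CommRing R] [Algebra R₀ R] where
  br : R → R → R
  add_left : ∀ a b c, br (a + b) c = br a c + br b c
  smul_left : ∀ (r : R₀) (a b : R), br (r • a) b = r • br a b
  antisymm : ∀ a b, br a b = - br b a
  leibniz : ∀ a b c, br a (b * c) = br a b * c + b * br a c
  jacobi : ∀ a b c, br a (br b c) + br b (br c a) + br c (br a b) = 0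

/-- `ε`-bilinear extension of a bracket to dual numbers. -/
def extBr {R : Type*} [CommRing R] (P : R → R → R) :
    DualNumber R → DualNumber R → DualNumber R := fun a b =>
  TrivSqZeroExt.inl (P a.fst b.fst) + TrivSqZeroExt.inr (P a.fst b.snd + P a.snd b.fst)

/-- The map `f + εv : C[ε] → B[ε]`. -/
def phiMap {B C : Type*} [CommRing B] [CommRing C] (f : C → B) (v : C → B) :
    DualNumber C → DualNumber B := fun c =>
  TrivSqZeroExt.inl (f c.fst) + TrivSqZeroExt.inr (v c.fst + f c.snd)

variable {k B C : Type*} [Field k] [CommRing B] [CommRing C] [Algebra k B] [Algebra k C]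

/-- A first-order deformation of `f` over `k[ε]` leaving domain and target fixed:
a Poisson `k[ε]`-algebra homomorphism `(C[ε],Π) → (B[ε],Λ)` inducing `f` modulo `ε`. -/
def IsFirstOrderDef (L : PoissonBracket k B) (P : PoissonBracket k C) (f : C →ₐ[k] B)
    (Φ : DualNumber C → DualNumber B) : Prop :=
  (∀ x y, Φ (x + y) = Φ x + Φ y) ∧
  (∀ x y, Φ (x * y) = Φ x * Φ y) ∧
  Φ 1 = 1 ∧
  (∀ (r : k) (x : DualNumber C), Φ (r • x) = r • Φ x) ∧
  (∀ x : DualNumber C,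
    Φ ((DualNumber.eps : DualNumber C) * x) = (DualNumber.eps : DualNumber B) * Φ x) ∧
  (∀ x y, Φ (extBr P.br x y) = extBr L.br (Φ x) (Φ y)) ∧
  (∀ x : DualNumber C, (Φ x).fst = f x.fst)

/-- An element of `ℍ⁰(X, f^*T_Y^•)`: a derivation `v ∈ Der_k(C,B)` with `π(v) = 0`. -/
def IsH0Class (L : PoissonBracket k B) (P : PoissonBracket k C) (f : C →ₐ[k] B)
    (v : C → B) : Prop :=
  (∀ a b, v (a + b) = v a + v b) ∧
  (∀ (r : k) (a : C), v (r • a) = r • v a) ∧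
  (∀ a b, v (a * b) = f a * v b + f b * v a) ∧
  (∀ a b, L.br (v a) (f b) + L.br (f a) (v b) - v (P.br a b) = 0)

/-!
A map `Φ : C[ε] → B[ε]` that is additive, `ε`-linear and reduces to `f` modulo `ε` is `f + εv`
for `v c := snd (Φ c)`. Evaluating each defining property of a Poisson deformation on
constants `a, b ∈ C` and comparing `ε`-coefficients turns it into the corresponding property of
`v`: additivity and linearity stay as they are, multiplicativity becomes the Leibniz rule for
`v` along `f`, and compatibility with the brackets becomes `π(v) = 0`. Conversely these
identities on constants propagate to all of `C[ε]` by `ε`-bilinearity.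
-/

namespace PoissonBracket

variable {R₀ R : Type*} [CommRing R₀] [CommRing R] [Algebra R₀ R] (P : PoissonBracket R₀ R)

lemma add_right (a b c : R) : P.br a (b + c) = P.br a b + P.br a c := by
  rw [P.antisymm, P.add_left, P.antisymm b, P.antisymm c, neg_add, neg_neg, neg_neg]

@[simp]
lemma zero_br (a : R) : P.br 0 a = 0 := by
  simpa using P.add_left 0 0 a

@[simp]
lemma br_zero (a : R) : P.br a 0 = 0 := by
  rw [P.antisymm, zero_br, neg_zero]

end PoissonBracket

section phiMap

open TrivSqZeroExt

variable {F : Type*} [FunLike F C B]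

@[simp]
lemma fst_phiMap (f v : C → B) (x : DualNumber C) : (phiMap f v x).fst = f x.fst := by
  simp [phiMap]

@[simp]
lemma snd_phiMap (f v : C → B) (x : DualNumber C) :
    (phiMap f v x).snd = v x.fst + f x.snd := by
  simp [phiMap]

@[simp]
lemma fst_extBr {R : Type*} [CommRing R] (Q : R → R → R) (x y : DualNumber R) :
    (extBr Q x y).fst = Q x.fst y.fst := by
  simp [extBr]

@[simp]
lemma snd_extBr {R : Type*} [CommRing R] (Q : R → R → R) (x y : DualNumber R) :
    (extBr Q x y).snd = Q x.fst y.snd + Q x.snd y.fst := by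
  simp [extBr]

lemma phiMap_injective (f : C → B) : Function.Injective (phiMap f) := by
  intro v w h
  funext c
  simpa using congrArg (fun Φ => (Φ (inl c)).snd) h

lemma eq_phiMap_of_additive (f : C → B) {Φ : DualNumber C → DualNumber B}
    (hadd : ∀ x y, Φ (x + y) = Φ x + Φ y)
    (heps : ∀ x, Φ (DualNumber.eps * x) = DualNumber.eps * Φ x)
    (hfst : ∀ x, (Φ x).fst = f x.fst) :
    Φ = phiMap f (fun c => (Φ (inl c)).snd) := by
  funext x
  have hx : x = inl x.fst + DualNumber.eps * inl x.snd := by ext <;> simp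
  ext
  · simp [hfst]
  · rw [hx, hadd, heps]
    simp [hfst]

variable (f : F) (v : C → B)

lemma phiMap_map_add_iff [AddMonoidHomClass F C B] :
    (∀ x y, phiMap f v (x + y) = phiMap f v x + phiMap f v y) ↔
      ∀ a b, v (a + b) = v a + v b := by
  refine ⟨fun h a b => by simpa using congrArg snd (h (inl a) (inl b)), fun h x y => ?_⟩
  ext
  · simp
  · simp only [snd_phiMap, fst_add, snd_add, h, map_add]
    abel

lemma phiMap_eps_mul [AddMonoidHomClass F C B] (hv : v 0 = 0) (x : DualNumber C) :
    phiMap f v (DualNumber.eps * x) = DualNumber.eps * phiMap f v x := by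
  ext <;> simp [hv]

lemma phiMap_map_mul_iff [RingHomClass F C B] :
    (∀ x y, phiMap f v (x * y) = phiMap f v x * phiMap f v y) ↔
      ∀ a b, v (a * b) = f a * v b + f b * v a := by
  refine ⟨fun h a b => ?_, fun h x y => ?_⟩
  · simpa [DualNumber.snd_mul, add_comm, mul_comm] using congrArg snd (h (inl a) (inl b))
  · ext
    · simp
    · simp only [snd_phiMap, DualNumber.snd_mul, fst_phiMap, fst_mul, h, map_add, map_mul]
      ring

lemma phiMap_one [RingHomClass F C B] (hv : v 1 = 0) : phiMap f v 1 = 1 := by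
  ext <;> simp [hv]

lemma phiMap_map_smul_iff {R : Type*} [CommSemiring R] [Algebra R B] [Algebra R C]
    [AlgHomClass F R C B] :
    (∀ (r : R) x, phiMap f v (r • x) = r • phiMap f v x) ↔ ∀ (r : R) a, v (r • a) = r • v a := by
  refine ⟨fun h r a => by simpa using congrArg snd (h r (inl a)), fun h r x => ?_⟩
  ext <;> simp [h]

variable {R₀ : Type*} [CommRing R₀] [Algebra R₀ B] [Algebra R₀ C]
  (L : PoissonBracket R₀ B) (P : PoissonBracket R₀ C)

lemma phiMap_map_extBr_iff [AddMonoidHomClass F C B]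
    (hf : ∀ a b, f (P.br a b) = L.br (f a) (f b)) :
    (∀ x y, phiMap f v (extBr P.br x y) = extBr L.br (phiMap f v x) (phiMap f v y)) ↔
      ∀ a b, L.br (v a) (f b) + L.br (f a) (v b) - v (P.br a b) = 0 := by
  refine ⟨fun h a b => ?_, fun h x y => ?_⟩
  · have := congrArg snd (h (inl a) (inl b))
    simp only [snd_phiMap, snd_extBr, fst_extBr, fst_phiMap, fst_inl, snd_inl, P.br_zero,
      P.zero_br, add_zero, map_zero] at this
    rw [this]
    ring
  · ext
    · simp [hf]
    · simp only [snd_phiMap, snd_extBr, fst_extBr, fst_phiMap, map_add, hf, L.add_right,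
        L.add_left]
      linear_combination -h x.fst y.fst

end phiMap

lemma IsH0Class.map_zero {L : PoissonBracket k B} {P : PoissonBracket k C} {f : C →ₐ[k] B}
    {v : C → B} (hv : IsH0Class L P f v) : v 0 = 0 := by
  simpa using hv.1 0 0

lemma IsH0Class.map_one {L : PoissonBracket k B} {P : PoissonBracket k C} {f : C →ₐ[k] B}
    {v : C → B} (hv : IsH0Class L P f v) : v 1 = 0 := by
  simpa using hv.2.2.1 1 1

lemma isFirstOrderDef_phiMap_iff {L : PoissonBracket k B} {P : PoissonBracket k C}
    {f : C →ₐ[k] B} (hf : ∀ a b, f (P.br a b) = L.br (f a) (f b)) {v : C → B} :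
    IsFirstOrderDef L P f (phiMap f v) ↔ IsH0Class L P f v := by
  constructor
  · rintro ⟨hadd, hmul, -, hsmul, -, hbr, -⟩
    exact ⟨(phiMap_map_add_iff f v).1 hadd, (phiMap_map_smul_iff f v).1 hsmul,
      (phiMap_map_mul_iff f v).1 hmul, (phiMap_map_extBr_iff f v L P hf).1 hbr⟩
  · intro hv
    have hv0 := hv.map_zero
    have hv1 := hv.map_one
    obtain ⟨hadd, hsmul, hmul, hbr⟩ := hv
    exact ⟨(phiMap_map_add_iff f v).2 hadd, (phiMap_map_mul_iff f v).2 hmul,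
      phiMap_one f v hv1, (phiMap_map_smul_iff f v).2 hsmul,
      phiMap_eps_mul f v hv0, (phiMap_map_extBr_iff f v L P hf).2 hbr, fst_phiMap f v⟩

lemma IsFirstOrderDef.eq_phiMap {L : PoissonBracket k B} {P : PoissonBracket k C}
    {f : C →ₐ[k] B} {Φ : DualNumber C → DualNumber B} (hΦ : IsFirstOrderDef L P f Φ) :
    Φ = phiMap f (fun c => (Φ (TrivSqZeroExt.inl c)).snd) := by
  obtain ⟨hadd, -, -, -, heps, -, hfst⟩ := hΦ
  exact eq_phiMap_of_additive f hadd heps hfst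

/-- `v ↦ f + εv` is a bijection between `ℍ⁰(X,f^*T_Y^•)` and
`Def_{(X,Λ₀)/f/(Y,Π₀)}(k[ε])`. -/
theorem stmt12 (L : PoissonBracket k B) (P : PoissonBracket k C) (f : C →ₐ[k] B)
    (hf : ∀ a b, f (P.br a b) = L.br (f a) (f b)) :
    -- well defined
    ((∀ v : C → B, IsH0Class L P f v → IsFirstOrderDef L P f (phiMap (⇑f) v))
    -- injective
    ∧ (∀ v w : C → B, IsH0Class L P f v → IsH0Class L P f w →
        phiMap (⇑f) v = phiMap (⇑f) w → v = w)
    -- surjective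
    ∧ (∀ Φ : DualNumber C → DualNumber B, IsFirstOrderDef L P f Φ →
        ∃ v : C → B, IsH0Class L P f v ∧ phiMap (⇑f) v = Φ)) := by
  refine ⟨fun _ => (isFirstOrderDef_phiMap_iff hf).2, fun _ _ _ _ h => phiMap_injective f h,
    fun Φ hΦ => ?_⟩
  have hΦ_eq := hΦ.eq_phiMap
  rw [hΦ_eq] at hΦ
  exact ⟨_, (isFirstOrderDef_phiMap_iff hf).1 hΦ, hΦ_eq.symm⟩
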